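/- Optimal baseline normal equations: Fix coordinate i and consider the estimator g(b) = ∑_{t=1}^T (R(s̄) − b_t)·D_t where D_t := ∂_{θ_i} log π_θ(a_t | s_t) and b ∈ ℝ^T is a vector of constant baselines. Then E[g(b)] does not depend on b, and the vector b* minimizing E[g(b)²] satisfies the linear system X b* = y, where X_{τ,t} = E[D_t D_τ] and y_τ = E[R(s̄) · (∑_{t=1}^T D_t) · D_τ]. In particular if X is invertible, b* = X^{-1} y is the unique minimizer. -/

import Mathlib

/-!
Differentiating `∑ₐ π_θ(a | s) = 1` gives `∑ₐ π_θ(a | s) ∂ᵢ log π_θ(a | s) = 0`. In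
`E[D_t] = ∑_τ ∏_u p_u(τ) π_θ(a_u | s_u) · D_t(τ)` the factors of the steps after `t` depend only on
the past and on their own step, so they sum to one over it; summing the factor of step `t` over
the action then leaves `∑ₐ π_θ(a | s_t) ∂ᵢ log π_θ(a | s_t) = 0`. Hence `E[D_t] = 0` and
`E[g(b)] = E[R ∑_t D_t] - ∑_t b_t E[D_t]` does not depend on `b`.

`E[g(b)²]` is the weighted least-squares error of fitting `R ∑_t D_t` by `∑_t b_t D_t`, and
`E[g(b + v)²] = E[g(b)²] - 2 v ⬝ (y - X b) + E[(∑_t v_t D_t)²]`. The last term is nonnegative,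
so solutions of `X b = y` are minimizers; conversely, along `v = s (y - X b)` the right-hand side
is a quadratic in `s` that stays above `E[g(b)²]` only if `y - X b = 0`.
-/

open Finset Function Matrix

theorem mul_fderiv_log_apply {E : Type*} [NormedAddCommGroup E] [NormedSpace ℝ E]
    {f : E → ℝ} {θ : E} (hf : DifferentiableAt ℝ f θ) (hθ : f θ ≠ 0) (v : E) :
    f θ * fderiv ℝ (fun θ => Real.log (f θ)) θ v = fderiv ℝ f θ v := by
  rw [(hf.hasFDerivAt.log hθ).fderiv, _root_.smul_apply, smul_eq_mul,
    mul_inv_cancel_left₀ hθ]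

theorem sum_mul_fderiv_log_eq_zero {E ι : Type*} [NormedAddCommGroup E] [NormedSpace ℝ E]
    [Fintype ι] {q : ι → E → ℝ} {θ : E} (hdiff : ∀ a, DifferentiableAt ℝ (q a) θ)
    (hpos : ∀ a, q a θ ≠ 0) (hsum : ∀ θ, ∑ a, q a θ = 1) (v : E) :
    ∑ a, q a θ * fderiv ℝ (fun θ => Real.log (q a θ)) θ v = 0 := by
  have hconst : (fun θ => ∑ a, q a θ) = fun _ => 1 := funext hsum
  have h0 : ∑ a, fderiv ℝ (q a) θ = 0 := by
    rw [← fderiv_fun_sum fun a _ => hdiff a, hconst, fderiv_const_apply]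
  simp only [mul_fderiv_log_apply (hdiff _) (hpos _), ← _root_.sum_apply, h0,
    _root_.zero_apply]

theorem Fintype.card_nsmul_sum_eq_sum_sum_update {ι X M : Type*} [DecidableEq ι] [Fintype ι]
    [Fintype X] [AddCommMonoid M] (k : ι) (F : (ι → X) → M) :
    Fintype.card X • ∑ τ, F τ = ∑ τ, ∑ x, F (update τ k x) := by
  let e := Equiv.funSplitAt k X
  have hupdate : ∀ y x σ, update (e.symm (y, σ)) k x = e.symm (x, σ) := by
    intro y x σ
    ext j
    by_cases hj : j = k
    · subst hj; simp [e]
    · simp [e, hj]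
  rw [← e.symm.sum_comp, ← e.symm.sum_comp, Fintype.sum_prod_type, Fintype.sum_prod_type]
  simp only [hupdate]
  rw [sum_comm, sum_const, card_univ]

theorem Fintype.sum_eq_zero_of_sum_sum_update_eq_zero {ι X M : Type*} [DecidableEq ι]
    [Fintype ι] [Fintype X] [AddCommMonoid M] [IsAddTorsionFree M] (k : ι) {F : (ι → X) → M}
    (h : ∑ τ, ∑ x, F (update τ k x) = 0) : ∑ τ, F τ = 0 := by
  rcases isEmpty_or_nonempty X with hX | hX
  · have : IsEmpty (ι → X) := ⟨fun τ => hX.false (τ k)⟩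
    exact sum_of_isEmpty _
  · rw [← Fintype.card_nsmul_sum_eq_sum_sum_update k, ← nsmul_zero (Fintype.card X)] at h
    exact nsmul_right_injective Fintype.card_ne_zero h

section Trajectory

variable {T : ℕ} {S A : Type*}
  (p : Fin T → (Fin T → S × A) → ℝ) (q : S → A → ℝ)

def stepWeight (u : Fin T) (τ : Fin T → S × A) : ℝ := p u τ * q (τ u).1 (τ u).2

def prefixWeight (m : ℕ) (τ : Fin T → S × A) : ℝ :=
  ∏ u ∈ univ.filter (fun u : Fin T => (u : ℕ) < m), stepWeight p q u τ

def IsStateCausal : Prop :=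
  ∀ (t : Fin T) (τ τ' : Fin T → S × A),
    (∀ u, u < t → τ u = τ' u) → (τ t).1 = (τ' t).1 → p t τ = p t τ'

variable {p}

theorem stepWeight_update_of_lt
    (hp : IsStateCausal p) {u k : Fin T} (huk : u < k) (τ : Fin T → S × A) (x : S × A) :
    stepWeight p q u (update τ k x) = stepWeight p q u τ := by
  have hpre : ∀ v, v < u → update τ k x v = τ v := fun v hv =>
    update_of_ne (hv.trans huk).ne _ _
  rw [stepWeight, stepWeight, hp u _ τ hpre (by rw [update_of_ne huk.ne]), update_of_ne huk.ne]

theorem prefixWeight_update_of_le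
    (hp : IsStateCausal p) {m : ℕ} {k : Fin T} (hmk : m ≤ k) (τ : Fin T → S × A) (x : S × A) :
    prefixWeight p q m (update τ k x) = prefixWeight p q m τ :=
  prod_congr rfl fun _ hu =>
    stepWeight_update_of_lt q hp (Fin.lt_def.mpr ((mem_filter.mp hu).2.trans_le hmk)) τ x

theorem prefixWeight_succ (k : Fin T) (τ : Fin T → S × A) :
    prefixWeight p q (k + 1) τ = prefixWeight p q k τ * stepWeight p q k τ := by
  have hins : univ.filter (fun u : Fin T => (u : ℕ) < k + 1)
      = insert k (univ.filter fun u : Fin T => (u : ℕ) < k) := by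
    ext u
    simp only [mem_filter, mem_univ, true_and, mem_insert, Fin.ext_iff]
    omega
  rw [prefixWeight, hins, prod_insert (by simp), mul_comm]
  rfl

theorem prefixWeight_of_le {m : ℕ} (hm : T ≤ m) (τ : Fin T → S × A) :
    prefixWeight p q m τ = ∏ u, stepWeight p q u τ := by
  rw [prefixWeight, filter_true_of_mem fun u _ => u.isLt.trans_le hm]

theorem sum_stepWeight_update_mul [Fintype S] [Fintype A] (hp : IsStateCausal p) (k : Fin T)
    (τ : Fin T → S × A) (h : S → A → ℝ) :
    ∑ x : S × A, stepWeight p q k (update τ k x) * h x.1 x.2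
      = ∑ s, p k (update τ k (s, (τ k).2)) * ∑ a, q s a * h s a := by
  rw [Fintype.sum_prod_type]
  refine sum_congr rfl fun s _ => ?_
  rw [mul_sum]
  refine sum_congr rfl fun a _ => ?_
  have hpk : p k (update τ k (s, a)) = p k (update τ k (s, (τ k).2)) :=
    hp k _ _ (fun v hv => by rw [update_of_ne hv.ne, update_of_ne hv.ne]) (by simp)
  rw [stepWeight, hpk, update_self, mul_assoc]

theorem sum_stepWeight_update [Fintype S] [Fintype A] (hp : IsStateCausal p)
    (hpsum : ∀ t τ, ∑ s, p t (update τ t (s, (τ t).2)) = 1) (hqsum : ∀ s, ∑ a, q s a = 1)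
    (k : Fin T) (τ : Fin T → S × A) :
    ∑ x : S × A, stepWeight p q k (update τ k x) = 1 := by
  simpa only [mul_one, hqsum, hpsum] using sum_stepWeight_update_mul q hp k τ fun _ _ => 1

theorem sum_prod_stepWeight_mul_eq_zero [Fintype S] [Fintype A] (hp : IsStateCausal p)
    (hpsum : ∀ t τ, ∑ s, p t (update τ t (s, (τ t).2)) = 1) (hqsum : ∀ s, ∑ a, q s a = 1)
    {h : S → A → ℝ} (hh : ∀ s, ∑ a, q s a * h s a = 0) (t : Fin T) :
    ∑ τ, (∏ u, stepWeight p q u τ) * h (τ t).1 (τ t).2 = 0 := by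
  have hprefix : ∀ m : ℕ, (t : ℕ) < m → m ≤ T →
      ∑ τ, prefixWeight p q m τ * h (τ t).1 (τ t).2 = 0 := by
    intro m htm
    induction m, htm using Nat.le_induction with
    | base =>
      intro hT
      refine Fintype.sum_eq_zero_of_sum_sum_update_eq_zero t (sum_eq_zero fun τ _ => ?_)
      calc ∑ x : S × A,
            prefixWeight p q (t + 1) (update τ t x) * h (update τ t x t).1 (update τ t x t).2
          = prefixWeight p q t τ * ∑ x : S × A, stepWeight p q t (update τ t x) * h x.1 x.2 := by
            simp only [prefixWeight_succ, prefixWeight_update_of_le q hp le_rfl,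
              update_self, mul_sum, mul_assoc]
        _ = 0 := by simp [sum_stepWeight_update_mul q hp, hh]
    | succ m htm ih =>
      intro hT
      obtain ⟨k, rfl⟩ : ∃ k : Fin T, (k : ℕ) = m := ⟨⟨m, hT⟩, rfl⟩
      refine Fintype.sum_eq_zero_of_sum_sum_update_eq_zero k
        ((sum_congr rfl fun τ _ => ?_).trans (ih k.isLt.le))
      have htk : t ≠ k := Fin.ne_of_lt (Fin.lt_def.mpr htm)
      calc ∑ x : S × A,
            prefixWeight p q (k + 1) (update τ k x) * h (update τ k x t).1 (update τ k x t).2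
          = prefixWeight p q k τ * h (τ t).1 (τ t).2 *
              ∑ x : S × A, stepWeight p q k (update τ k x) := by
            simp only [prefixWeight_succ, prefixWeight_update_of_le q hp le_rfl, update_of_ne htk,
              mul_sum]
            exact sum_congr rfl fun _ _ => by ring
        _ = prefixWeight p q k τ * h (τ t).1 (τ t).2 := by
            rw [sum_stepWeight_update q hp hpsum hqsum, mul_one]
  simpa only [prefixWeight_of_le q le_rfl] using hprefix T t.isLt le_rfl

end Trajectory

section LeastSquares

variable {Ω ι : Type*} [Fintype Ω] [Fintype ι] (w f : Ω → ℝ) (D : ι → Ω → ℝ)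

def weightedGram : Matrix ι ι ℝ := fun u v => ∑ ω, w ω * (D v ω * D u ω)

def weightedMoment (u : ι) : ℝ := ∑ ω, w ω * (f ω * D u ω)

def weightedSqError (b : ι → ℝ) : ℝ := ∑ ω, w ω * (f ω - ∑ u, b u * D u ω) ^ 2

theorem sum_mul_sub_sum_mul (b : ι → ℝ) :
    ∑ ω, w ω * (f ω - ∑ u, b u * D u ω) = ∑ ω, w ω * f ω - ∑ u, b u * ∑ ω, w ω * D u ω := by
  simp only [mul_sub, sum_sub_distrib, mul_sum]
  rw [sum_comm]
  congr 1
  exact sum_congr rfl fun _ _ => sum_congr rfl fun _ _ => by ring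

theorem sum_mul_residual_mul (b : ι → ℝ) (u : ι) :
    ∑ ω, w ω * ((f ω - ∑ v, b v * D v ω) * D u ω)
      = (weightedMoment w f D - weightedGram w D *ᵥ b) u := by
  simp only [Pi.sub_apply, weightedMoment, Matrix.mulVec, dotProduct, weightedGram, sub_mul,
    mul_sub, sum_sub_distrib, sum_mul, mul_sum]
  rw [sum_comm (s := univ) (t := univ) (f := fun ω v => w ω * (b v * D v ω * D u ω))]
  exact congrArg _ (sum_congr rfl fun _ _ => sum_congr rfl fun _ _ => by ring)

theorem weightedSqError_add (b v : ι → ℝ) :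
    weightedSqError w f D (b + v) = weightedSqError w f D b
      - 2 * (v ⬝ᵥ (weightedMoment w f D - weightedGram w D *ᵥ b))
      + ∑ ω, w ω * (∑ u, v u * D u ω) ^ 2 := by
  have hcross : ∑ ω, w ω * ((f ω - ∑ u, b u * D u ω) * ∑ u, v u * D u ω)
      = v ⬝ᵥ (weightedMoment w f D - weightedGram w D *ᵥ b) := by
    simp only [dotProduct, ← sum_mul_residual_mul, mul_sum]
    rw [sum_comm]
    exact sum_congr rfl fun _ _ => sum_congr rfl fun _ _ => by ring
  rw [← hcross, weightedSqError, weightedSqError, mul_sum, ← sum_sub_distrib, ← sum_add_distrib]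
  refine sum_congr rfl fun ω _ => ?_
  simp only [Pi.add_apply, add_mul, sum_add_distrib]
  ring

theorem forall_weightedSqError_le_iff (hw : ∀ ω, 0 ≤ w ω) (b : ι → ℝ) :
    (∀ c, weightedSqError w f D b ≤ weightedSqError w f D c)
      ↔ weightedGram w D *ᵥ b = weightedMoment w f D := by
  rw [eq_comm, ← sub_eq_zero]
  constructor
  · intro hmin
    set r := weightedMoment w f D - weightedGram w D *ᵥ b
    set K := ∑ ω, w ω * (∑ u, r u * D u ω) ^ 2
    have hquad : ∀ t : ℝ, 0 ≤ K * (t * t) + (-2 * (r ⬝ᵥ r)) * t + 0 := by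
      intro t
      have hlin : ∀ ω, ∑ u, (t • r) u * D u ω = t * ∑ u, r u * D u ω := fun ω => by
        simp only [Pi.smul_apply, smul_eq_mul, mul_sum, mul_assoc]
      have hsq : ∑ ω, w ω * (∑ u, (t • r) u * D u ω) ^ 2 = t ^ 2 * K := by
        rw [mul_sum]
        exact sum_congr rfl fun ω _ => by rw [hlin]; ring
      have := hmin (b + t • r)
      rw [weightedSqError_add, hsq, smul_dotProduct, smul_eq_mul] at this
      nlinarith
    have hdisc := discrim_le_zero hquad
    rw [discrim] at hdisc
    exact dotProduct_self_eq_zero.mp (by nlinarith [dotProduct_self_star_nonneg r])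
  · intro hr c
    have := weightedSqError_add w f D b (c - b)
    rw [add_sub_cancel, hr, dotProduct_zero] at this
    linarith [sum_nonneg fun ω (_ : ω ∈ univ) =>
      mul_nonneg (hw ω) (sq_nonneg (∑ u, (c - b) u * D u ω))]

end LeastSquares

theorem Matrix.mulVec_eq_iff_eq_inv_mulVec {n α : Type*} [Fintype n] [DecidableEq n]
    [CommRing α] {X : Matrix n n α} (hX : IsUnit X) {b y : n → α} : X *ᵥ b = y ↔ b = X⁻¹ *ᵥ y := by
  have hdet := (Matrix.isUnit_iff_isUnit_det X).mp hX
  constructor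
  · rintro rfl
    rw [mulVec_mulVec, nonsing_inv_mul _ hdet, one_mulVec]
  · rintro rfl
    rw [mulVec_mulVec, mul_nonsing_inv _ hdet, one_mulVec]

theorem optimal_baseline_normal_equations_general
    (d T : ℕ) (S A : Type*) [Fintype S] [Fintype A]
    (p : Fin T → (Fin T → S × A) → ℝ)
    (π : EuclideanSpace ℝ (Fin d) → S → A → ℝ)
    (R : (Fin T → S × A) → ℝ)
    (hppos : ∀ t τ, 0 < p t τ)
    (hpdep : ∀ (t : Fin T) (τ τ' : Fin T → S × A),
      (∀ u, u < t → τ u = τ' u) → (τ t).1 = (τ' t).1 → p t τ = p t τ')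
    (hpsum : ∀ (t : Fin T) (τ : Fin T → S × A),
      ∑ s : S, p t (Function.update τ t (s, (τ t).2)) = 1)
    (hπpos : ∀ θ s a, 0 < π θ s a)
    (hπsum : ∀ θ s, ∑ a, π θ s a = 1)
    (hπdiff : ∀ s a, Differentiable ℝ fun θ => π θ s a)
    (P : EuclideanSpace ℝ (Fin d) → (Fin T → S × A) → ℝ)
    (hP : ∀ θ τ, P θ τ = ∏ t, p t τ * π θ (τ t).1 (τ t).2)
    (θ : EuclideanSpace ℝ (Fin d)) (i : Fin d)
    (D : Fin T → (Fin T → S × A) → ℝ)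
    (hD : ∀ t τ, D t τ = fderiv ℝ (fun θ' => Real.log (π θ' (τ t).1 (τ t).2)) θ
      (EuclideanSpace.single i 1))
    (g : (Fin T → ℝ) → (Fin T → S × A) → ℝ)
    (hg : ∀ b τ, g b τ = ∑ t, (R τ - b t) * D t τ)
    (Xmat : Matrix (Fin T) (Fin T) ℝ)
    (hX : ∀ τ' t, Xmat τ' t = ∑ τ : Fin T → S × A, P θ τ * (D t τ * D τ' τ))
    (y : Fin T → ℝ)
    (hy : ∀ τ', y τ' = ∑ τ : Fin T → S × A,
      P θ τ * (R τ * (∑ t, D t τ) * D τ' τ)) :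
    (∀ b c : Fin T → ℝ,
      ∑ τ : Fin T → S × A, P θ τ * g b τ = ∑ τ : Fin T → S × A, P θ τ * g c τ) ∧
    (∀ bopt : Fin T → ℝ,
      (∀ b : Fin T → ℝ,
        ∑ τ : Fin T → S × A, P θ τ * (g bopt τ) ^ 2
          ≤ ∑ τ : Fin T → S × A, P θ τ * (g b τ) ^ 2)
        ↔ Xmat.mulVec bopt = y) ∧
    (IsUnit Xmat → ∀ bopt : Fin T → ℝ,
      (∀ b : Fin T → ℝ,
        ∑ τ : Fin T → S × A, P θ τ * (g bopt τ) ^ 2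
          ≤ ∑ τ : Fin T → S × A, P θ τ * (g b τ) ^ 2)
        ↔ bopt = Xmat⁻¹.mulVec y) := by
  have hw : ∀ τ, 0 ≤ P θ τ := fun τ => by
    rw [hP]
    exact prod_nonneg fun u _ => (mul_pos (hppos u τ) (hπpos θ _ _)).le
  have hscore : ∀ t, ∑ τ, P θ τ * D t τ = 0 := fun t => by
    simp only [hP, hD]
    exact sum_prod_stepWeight_mul_eq_zero (π θ) hpdep hpsum (hπsum θ)
      (fun s => sum_mul_fderiv_log_eq_zero (q := fun a θ => π θ s a)
        (fun a => (hπdiff s a).differentiableAt) (fun a => (hπpos θ s a).ne') (hπsum · s) _) t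
  obtain rfl : g = fun b τ => R τ * ∑ t, D t τ - ∑ t, b t * D t τ := by
    funext b τ
    rw [hg, mul_sum, ← sum_sub_distrib]
    exact sum_congr rfl fun _ _ => by ring
  obtain rfl : Xmat = weightedGram (P θ) D := Matrix.ext hX
  obtain rfl : y = weightedMoment (P θ) (fun τ => R τ * ∑ t, D t τ) D := funext hy
  refine ⟨fun b c => ?_, forall_weightedSqError_le_iff _ _ _ hw,
    fun hU b => (forall_weightedSqError_le_iff _ _ _ hw b).trans (mulVec_eq_iff_eq_inv_mulVec hU)⟩
  simp only [sum_mul_sub_sum_mul, hscore, mul_zero, sum_const_zero]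

/-- Optimal baseline normal equations.  With
`D t τ = ∂_{θ_i} log π_θ(a_t|s_t)` and the estimator
`g(b)(τ) = ∑_t (R(τ) − b_t)·D_t(τ)` for a vector `b ∈ ℝ^T` of constant
baselines: the mean `E[g(b)]` does not depend on `b`; a vector `bopt` minimizes
`E[g(b)²]` iff it solves the normal equations `X bopt = y`, where
`X_{τ',t} = E[D_t D_{τ'}]` and `y_{τ'} = E[R·(∑_t D_t)·D_{τ'}]`; and if `X` is
invertible then `X⁻¹ y` is the unique minimizer. -/
theorem optimal_baseline_normal_equations
    (d T : ℕ) (S A : Type*) [Fintype S] [Fintype A] [DecidableEq S] [DecidableEq A]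
    (p : Fin T → (Fin T → S × A) → ℝ)
    (π : EuclideanSpace ℝ (Fin d) → S → A → ℝ)
    (R : (Fin T → S × A) → ℝ)
    (hppos : ∀ t τ, 0 < p t τ)
    (hpdep : ∀ (t : Fin T) (τ τ' : Fin T → S × A),
      (∀ u, u < t → τ u = τ' u) → (τ t).1 = (τ' t).1 → p t τ = p t τ')
    (hpsum : ∀ (t : Fin T) (τ : Fin T → S × A),
      ∑ s : S, p t (Function.update τ t (s, (τ t).2)) = 1)
    (hπpos : ∀ θ s a, 0 < π θ s a)
    (hπsum : ∀ θ s, ∑ a, π θ s a = 1)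
    (hπdiff : ∀ s a, Differentiable ℝ fun θ => π θ s a)
    (P : EuclideanSpace ℝ (Fin d) → (Fin T → S × A) → ℝ)
    (hP : ∀ θ τ, P θ τ = ∏ t, p t τ * π θ (τ t).1 (τ t).2)
    (θ : EuclideanSpace ℝ (Fin d)) (i : Fin d)
    (D : Fin T → (Fin T → S × A) → ℝ)
    (hD : ∀ t τ, D t τ = fderiv ℝ (fun θ' => Real.log (π θ' (τ t).1 (τ t).2)) θ
      (EuclideanSpace.single i 1))
    (g : (Fin T → ℝ) → (Fin T → S × A) → ℝ)
    (hg : ∀ b τ, g b τ = ∑ t, (R τ - b t) * D t τ)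
    (Xmat : Matrix (Fin T) (Fin T) ℝ)
    (hX : ∀ τ' t, Xmat τ' t = ∑ τ : Fin T → S × A, P θ τ * (D t τ * D τ' τ))
    (y : Fin T → ℝ)
    (hy : ∀ τ', y τ' = ∑ τ : Fin T → S × A,
      P θ τ * (R τ * (∑ t, D t τ) * D τ' τ)) :
    (∀ b c : Fin T → ℝ,
      ∑ τ : Fin T → S × A, P θ τ * g b τ = ∑ τ : Fin T → S × A, P θ τ * g c τ) ∧
    (∀ bopt : Fin T → ℝ,
      (∀ b : Fin T → ℝ,
        ∑ τ : Fin T → S × A, P θ τ * (g bopt τ) ^ 2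
          ≤ ∑ τ : Fin T → S × A, P θ τ * (g b τ) ^ 2)
        ↔ Xmat.mulVec bopt = y) ∧
    (IsUnit Xmat → ∀ bopt : Fin T → ℝ,
      (∀ b : Fin T → ℝ,
        ∑ τ : Fin T → S × A, P θ τ * (g bopt τ) ^ 2
          ≤ ∑ τ : Fin T → S × A, P θ τ * (g b τ) ^ 2)
        ↔ bopt = Xmat⁻¹.mulVec y) :=
  optimal_baseline_normal_equations_general d T S A p π R hppos hpdep hpsum hπpos hπsum hπdiff P hP
    θ i D hD g hg Xmat hX y hy
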